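/- arXiv:1412.4706 — 3 statements merged into one kernel-verified Lean document; each statement's English description precedes it below -/
import Mathlib

section
/- Let N ≥ 2 be an integer, γ > −N, ν ∈ (0,2), and let B(r,θ) = r^γ b(cos θ) be a non-cutoff cross section with constant C_b ≥ 1. Let f : ℝ^N → [0,∞) be measurable and for v' ≠ v define K_f(v,v') = (2^{N−1}/|v'−v|) ∫_{{w ∈ ℝ^N : w·(v'−v) = 0}} f(v+w) B(r,θ) r^{−(N−2)} dS(w), where r = √(|v'−v|² + |w|²) and θ ∈ (0,π) is determined by cos(θ/2) = |w|/r. Then there exists a constant c ≥ 1, depending only on N, γ, ν and C_b, such that for all v ∈ ℝ^N and v' ≠ v: c^{−1} K̄_f(v,v') ≤ K_f(v,v') ≤ c K̄_f(v,v'). -/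
open MeasureTheory Metric Set
open scoped ENNReal RealInnerProductSpace

noncomputable section

/-- The Boltzmann kernel
`K̄_f(v,v') = |v'-v|^{-N-ν} ∫_{w ⊥ (v'-v)} f(v+w) |w|^{γ+ν+1} dS(w)`,
where the inner integral is over the hyperplane orthogonal to `v' - v` with respect to the
`(N-1)`-dimensional Hausdorff measure. -/
def Kbar (N : ℕ) (γ ν : ℝ) (f : EuclideanSpace ℝ (Fin N) → ℝ)
    (v v' : EuclideanSpace ℝ (Fin N)) : ℝ≥0∞ :=
  ENNReal.ofReal (‖v' - v‖ ^ (-(N : ℝ) - ν)) *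
    ∫⁻ w in {w : EuclideanSpace ℝ (Fin N) | ⟪w, v' - v⟫ = 0},
      ENNReal.ofReal (f (v + w) * ‖w‖ ^ (γ + ν + 1)) ∂(μH[(N : ℝ) - 1])

/-- The exact kernel of the integro-differential part `Q₁` of the Boltzmann collision
operator with cross section `B(r,θ) = r^γ b(cos θ)`:
`K_f(v,v') = (2^{N-1}/|v'-v|) ∫_{w ⊥ (v'-v)} f(v+w) B(r,θ) r^{-(N-2)} dS(w)` where
`r = √(|v'-v|² + |w|²)` and `θ` is determined by `cos(θ/2) = |w|/r`. -/
def KfCross (N : ℕ) (γ : ℝ) (b : ℝ → ℝ≥0∞) (f : EuclideanSpace ℝ (Fin N) → ℝ)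
    (v v' : EuclideanSpace ℝ (Fin N)) : ℝ≥0∞ :=
  ENNReal.ofReal ((2 : ℝ) ^ (N - 1) / ‖v' - v‖) *
    ∫⁻ w in {w : EuclideanSpace ℝ (Fin N) | ⟪w, v' - v⟫ = 0},
      ENNReal.ofReal (f (v + w)) *
        (ENNReal.ofReal ((Real.sqrt (‖v' - v‖ ^ 2 + ‖w‖ ^ 2)) ^ γ) *
          b (Real.cos (2 * Real.arccos (‖w‖ / Real.sqrt (‖v' - v‖ ^ 2 + ‖w‖ ^ 2))))) *
        ENNReal.ofReal ((Real.sqrt (‖v' - v‖ ^ 2 + ‖w‖ ^ 2)) ^ (-((N : ℝ) - 2)))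
      ∂(μH[(N : ℝ) - 1])

open Real Filter Asymptotics

/-!
Write `R = |v' - v|`, `s = |w|`, `r = √(R² + s²)` and let `θ` be the deviation angle, so that
`sin (θ/2) = R/r` and `cos (θ/2) = s/r`. Then the integrand of `K_f` is exactly the integrand of
`K̄_f` times `2^{N-1} b(cos θ) sin(θ/2)^{N-1+ν} cos(θ/2)^{-(γ+ν+1)}`, and this angular factor is
bounded above and below on `(0, π)`: for `θ ≤ π/2`, `b(cos θ) ≈ θ^{-(N-1)-ν} ≈ sin(θ/2)^{-(N-1)-ν}`
and `cos(θ/2) ≈ 1`; for `θ > π/2`, `b(cos θ) ≈ (2 sin(θ/2) cos(θ/2))^{γ+ν+1}` and `sin(θ/2) ≈ 1`.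
The one point `w = 0`, where `θ = π` and nothing is known about `b`, is null for the
`(N-1)`-dimensional Hausdorff measure because `N ≥ 2`.
-/

lemma isTheta_principal_of_le_of_le {α : Type*} {s : Set α} {f g : α → ℝ} {C : ℝ} (hC : 0 < C)
    (hg : ∀ x ∈ s, 0 ≤ g x) (h : ∀ x ∈ s, C⁻¹ * g x ≤ f x ∧ f x ≤ C * g x) :
    f =Θ[𝓟 s] g := by
  have hf : ∀ x ∈ s, 0 ≤ f x := fun x hx =>
    (mul_nonneg (inv_nonneg.2 hC.le) (hg x hx)).trans (h x hx).1
  refine ⟨.of_bound C (eventually_principal.2 fun x hx => ?_),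
    .of_bound C (eventually_principal.2 fun x hx => ?_)⟩ <;>
    rw [norm_of_nonneg (hf x hx), norm_of_nonneg (hg x hx)]
  · exact (h x hx).2
  · exact (inv_mul_le_iff₀ hC).1 (h x hx).1

lemma Asymptotics.IsTheta.comp_tendsto {α β : Type*} {l : Filter α} {l' : Filter β} {f g : α → ℝ}
    (h : f =Θ[l] g) {k : β → α} (hk : Tendsto k l' l) : (f ∘ k) =Θ[l'] (g ∘ k) :=
  ⟨h.1.comp_tendsto hk, h.2.comp_tendsto hk⟩

lemma Asymptotics.IsTheta.exists_le_and_one_le_mul {α : Type*} {s : Set α} {f : α → ℝ}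
    (h : f =Θ[𝓟 s] fun _ => (1 : ℝ)) (hf : ∀ x ∈ s, 0 ≤ f x) :
    ∃ K, 1 ≤ K ∧ ∀ x ∈ s, f x ≤ K ∧ 1 ≤ K * f x := by
  obtain ⟨c₁, hc₁⟩ := h.1.bound
  obtain ⟨c₂, hc₂⟩ := h.2.bound
  rw [eventually_principal] at hc₁ hc₂
  refine ⟨max 1 (max c₁ c₂), le_max_left _ _, fun x hx => ⟨?_, ?_⟩⟩
  · have := hc₁ x hx
    rw [norm_of_nonneg (hf x hx), norm_one, mul_one] at this
    exact this.trans ((le_max_left _ _).trans (le_max_right _ _))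
  · have := hc₂ x hx
    rw [norm_of_nonneg (hf x hx), norm_one] at this
    exact this.trans (mul_le_mul_of_nonneg_right
      ((le_max_right _ _).trans (le_max_right _ _)) (hf x hx))

lemma ENNReal.le_toReal_and_toReal_le {a b : ℝ} {x : ℝ≥0∞} (hb : 0 ≤ b)
    (h : ENNReal.ofReal a ≤ x ∧ x ≤ ENNReal.ofReal b) : a ≤ x.toReal ∧ x.toReal ≤ b :=
  ⟨(ENNReal.ofReal_le_iff_le_toReal (ne_top_of_le_ne_top ENNReal.ofReal_ne_top h.2)).1 h.1,
    ENNReal.toReal_le_of_le_ofReal hb h.2⟩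

lemma const_mul_setLIntegral_le {α : Type*} [MeasurableSpace α] {μ : Measure α} {s : Set α}
    {a b c : ℝ≥0∞} {φ ψ : α → ℝ≥0∞} (ha : a ≠ ∞) (hb : b ≠ ∞) (hc : c ≠ ∞)
    (h : ∀ᵐ x ∂μ.restrict s, a * φ x ≤ c * (b * ψ x)) :
    a * ∫⁻ x in s, φ x ∂μ ≤ c * (b * ∫⁻ x in s, ψ x ∂μ) := by
  rw [← lintegral_const_mul' _ _ ha, ← lintegral_const_mul' _ _ hb, ← lintegral_const_mul' _ _ hc]
  exact lintegral_mono_ae h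

lemma isTheta_id_sin_half : (fun θ : ℝ => θ) =Θ[𝓟 (Icc 0 π)] fun θ => sin (θ / 2) := by
  refine isTheta_principal_of_le_of_le pi_pos
    (fun θ hθ => sin_nonneg_of_nonneg_of_le_pi (by linarith [hθ.1]) (by linarith [hθ.2, pi_pos]))
    fun θ hθ => ⟨?_, ?_⟩
  · have := sin_le (x := θ / 2) (by linarith [hθ.1])
    rw [inv_mul_le_iff₀ pi_pos]
    nlinarith [pi_gt_three, hθ.1]
  · have := mul_le_sin (x := θ / 2) (by linarith [hθ.1]) (by linarith [hθ.2])
    calc θ = π * (2 / π * (θ / 2)) := by field_simp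
      _ ≤ π * sin (θ / 2) := by gcongr

lemma isTheta_cos_half_one : (fun θ : ℝ => cos (θ / 2)) =Θ[𝓟 (Icc 0 (π / 2))] fun _ => (1 : ℝ) :=
  ContinuousOn.isTheta_principal (by fun_prop) isCompact_Icc (by norm_num) fun θ hθ =>
    (cos_pos_of_mem_Ioo ⟨by linarith [hθ.1, pi_pos], by linarith [hθ.2, pi_pos]⟩).ne'

lemma isTheta_sin_half_one : (fun θ : ℝ => sin (θ / 2)) =Θ[𝓟 (Icc (π / 2) π)] fun _ => (1 : ℝ) :=
  ContinuousOn.isTheta_principal (by fun_prop) isCompact_Icc (by norm_num) fun θ hθ =>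
    (sin_pos_of_pos_of_lt_pi (by linarith [hθ.1, pi_pos]) (by linarith [hθ.2, pi_pos])).ne'

/-- `β` stands for `b (cos θ)`, and `θ ^ e`, `(sin θ) ^ g` are the grazing and large-angle
profiles of `b`. -/
def angularFactor (e g θ β : ℝ) : ℝ := β * sin (θ / 2) ^ (-e) * cos (θ / 2) ^ (-g)

lemma angularFactor_isTheta_one_grazing (e g : ℝ) {C : ℝ} (hC : 0 < C) :
    (fun p : ℝ × ℝ => angularFactor e g p.1 p.2) =Θ[𝓟 {p | p.1 ∈ Ioc 0 (π / 2) ∧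
      C⁻¹ * p.1 ^ e ≤ p.2 ∧ p.2 ≤ C * p.1 ^ e}] fun _ => (1 : ℝ) := by
  set S := {p : ℝ × ℝ | p.1 ∈ Ioc 0 (π / 2) ∧ C⁻¹ * p.1 ^ e ≤ p.2 ∧ p.2 ≤ C * p.1 ^ e}
  have hfst : Tendsto Prod.fst (𝓟 S) (𝓟 (Icc 0 (π / 2))) :=
    tendsto_principal_principal.2 fun p hp => Ioc_subset_Icc_self hp.1
  have hsin_pos : ∀ᶠ p in 𝓟 S, 0 < sin (p.1 / 2) := eventually_principal.2 fun p hp =>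
    sin_pos_of_pos_of_lt_pi (by linarith [hp.1.1]) (by linarith [hp.1.2, pi_pos])
  have hβ : (fun p : ℝ × ℝ => p.2) =Θ[𝓟 S] fun p => p.1 ^ e :=
    isTheta_principal_of_le_of_le hC (fun p hp => rpow_nonneg hp.1.1.le _) fun p hp => hp.2
  have hθ : (fun p : ℝ × ℝ => p.1 ^ e) =Θ[𝓟 S] fun p => sin (p.1 / 2) ^ e :=
    (isTheta_id_sin_half.comp_tendsto (hfst.trans (tendsto_principal_principal.2
      fun θ hθ => ⟨hθ.1, by linarith [hθ.2, pi_pos]⟩))).rpow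
      (eventually_principal.2 fun p hp => hp.1.1.le) (hsin_pos.mono fun p hp => hp.le)
  have hcos : (fun p : ℝ × ℝ => cos (p.1 / 2) ^ (-g)) =Θ[𝓟 S] fun _ => (1 : ℝ) := by
    simpa using ((isTheta_cos_half_one.comp_tendsto hfst).rpow (r := -g)
      (eventually_principal.2 fun p hp => (cos_pos_of_mem_Ioo
        ⟨by linarith [hp.1.1, pi_pos], by linarith [hp.1.2, pi_pos]⟩).le)
      (Eventually.of_forall fun _ => zero_le_one))
  refine (((hβ.trans hθ).mul (isTheta_refl (fun p : ℝ × ℝ => sin (p.1 / 2) ^ (-e)) _)).mul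
    hcos).trans_eventuallyEq (hsin_pos.mono fun p hp => ?_)
  simp only [rpow_neg hp.le, mul_one]
  exact mul_inv_cancel₀ (rpow_pos_of_pos hp e).ne'

lemma angularFactor_isTheta_one_large (e g : ℝ) {C : ℝ} (hC : 0 < C) :
    (fun p : ℝ × ℝ => angularFactor e g p.1 p.2) =Θ[𝓟 {p | p.1 ∈ Ioo (π / 2) π ∧
      C⁻¹ * sin p.1 ^ g ≤ p.2 ∧ p.2 ≤ C * sin p.1 ^ g}] fun _ => (1 : ℝ) := by
  set S := {p : ℝ × ℝ | p.1 ∈ Ioo (π / 2) π ∧ C⁻¹ * sin p.1 ^ g ≤ p.2 ∧ p.2 ≤ C * sin p.1 ^ g}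
  have hfst : Tendsto Prod.fst (𝓟 S) (𝓟 (Icc (π / 2) π)) :=
    tendsto_principal_principal.2 fun p hp => Ioo_subset_Icc_self hp.1
  have hsin : ∀ p ∈ S, 0 < sin (p.1 / 2) := fun p hp =>
    sin_pos_of_pos_of_lt_pi (by linarith [hp.1.1, pi_pos]) (by linarith [hp.1.2, pi_pos])
  have hcos : ∀ p ∈ S, 0 < cos (p.1 / 2) := fun p hp =>
    cos_pos_of_mem_Ioo ⟨by linarith [hp.1.1, pi_pos], by linarith [hp.1.2, pi_pos]⟩
  have hβ : (fun p : ℝ × ℝ => p.2) =Θ[𝓟 S] fun p => sin p.1 ^ g :=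
    isTheta_principal_of_le_of_le hC
      (fun p hp => rpow_nonneg
        (sin_nonneg_of_nonneg_of_le_pi (by linarith [hp.1.1, pi_pos]) hp.1.2.le) _)
      fun p hp => hp.2
  have hhalf : (fun p : ℝ × ℝ => 2 ^ g * sin (p.1 / 2) ^ (g - e)) =Θ[𝓟 S] fun _ => (1 : ℝ) := by
    rw [isTheta_const_mul_left (by positivity)]
    simpa using ((isTheta_sin_half_one.comp_tendsto hfst).rpow (r := g - e)
      (eventually_principal.2 fun p hp => (hsin p hp).le)
      (Eventually.of_forall fun _ => zero_le_one))
  refine ((hβ.mul (isTheta_refl (fun p : ℝ × ℝ => sin (p.1 / 2) ^ (-e)) _)).mul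
    (isTheta_refl (fun p : ℝ × ℝ => cos (p.1 / 2) ^ (-g)) _)).trans_eventuallyEq
    (eventually_principal.2 fun p hp => ?_) |>.trans hhalf
  have hs := hsin p hp
  have hc := hcos p hp
  have hdouble : sin p.1 = 2 * sin (p.1 / 2) * cos (p.1 / 2) := by
    rw [← sin_two_mul]; ring_nf
  dsimp only
  rw [hdouble, mul_rpow (by positivity) hc.le, mul_rpow zero_le_two hs.le, rpow_sub hs,
    rpow_neg hc.le, rpow_neg hs.le]
  field_simp

lemma angularFactor_nonneg (e g : ℝ) {θ β : ℝ} (hθ : θ ∈ Icc 0 π) (hβ : 0 ≤ β) :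
    0 ≤ angularFactor e g θ β :=
  mul_nonneg (mul_nonneg hβ (rpow_nonneg (sin_nonneg_of_nonneg_of_le_pi
    (by linarith [hθ.1]) (by linarith [hθ.2, pi_pos])) _))
    (rpow_nonneg (cos_nonneg_of_mem_Icc ⟨by linarith [hθ.1, pi_pos], by linarith [hθ.2]⟩) _)

lemma exists_angularFactor_bounds (e g : ℝ) {C : ℝ} (hC : 0 < C) :
    ∃ K, 1 ≤ K ∧ ∀ θ ∈ Ioo 0 π, ∀ x : ℝ≥0∞,
      (0 ≤ cos θ →
        ENNReal.ofReal (C⁻¹ * θ ^ e) ≤ x ∧ x ≤ ENNReal.ofReal (C * θ ^ e)) →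
      (cos θ < 0 →
        ENNReal.ofReal (C⁻¹ * sin θ ^ g) ≤ x ∧ x ≤ ENNReal.ofReal (C * sin θ ^ g)) →
      x ≠ ∞ ∧ angularFactor e g θ x.toReal ≤ K ∧ 1 ≤ K * angularFactor e g θ x.toReal := by
  have h := (angularFactor_isTheta_one_grazing e g hC).sup
    (angularFactor_isTheta_one_large e g hC)
  rw [sup_principal] at h
  obtain ⟨K, hK1, hK⟩ := h.exists_le_and_one_le_mul fun p hp => by
    rcases hp with hp | hp
    · exact angularFactor_nonneg e g ⟨hp.1.1.le, by linarith [hp.1.2, pi_pos]⟩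
        ((mul_nonneg (inv_nonneg.2 hC.le) (rpow_nonneg hp.1.1.le _)).trans hp.2.1)
    · have hsin : 0 ≤ sin p.1 := sin_nonneg_of_nonneg_of_le_pi
        (by linarith [hp.1.1, pi_pos]) hp.1.2.le
      exact angularFactor_nonneg e g ⟨by linarith [hp.1.1, pi_pos], hp.1.2.le⟩
        ((mul_nonneg (inv_nonneg.2 hC.le) (rpow_nonneg hsin _)).trans hp.2.1)
  refine ⟨K, hK1, fun θ hθ x hgraz hlarge => ?_⟩
  rcases le_or_gt 0 (cos θ) with hcos | hcos
  · have hθ' : θ ≤ π / 2 := le_of_not_gt fun h =>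
      (cos_neg_of_pi_div_two_lt_of_lt h (by linarith [hθ.2])).not_ge hcos
    have hx := hgraz hcos
    exact ⟨ne_top_of_le_ne_top ENNReal.ofReal_ne_top hx.2, hK (θ, x.toReal) (Or.inl
      ⟨⟨hθ.1, hθ'⟩, ENNReal.le_toReal_and_toReal_le
        (mul_nonneg hC.le (rpow_nonneg hθ.1.le _)) hx⟩)⟩
  · have hθ' : π / 2 < θ := lt_of_not_ge fun h =>
      (cos_nonneg_of_mem_Icc ⟨by linarith [hθ.1, pi_pos], h⟩).not_gt hcos
    have hx := hlarge hcos
    exact ⟨ne_top_of_le_ne_top ENNReal.ofReal_ne_top hx.2, hK (θ, x.toReal) (Or.inr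
      ⟨⟨hθ', hθ.2⟩, ENNReal.le_toReal_and_toReal_le (mul_nonneg hC.le
        (rpow_nonneg (sin_nonneg_of_nonneg_of_le_pi hθ.1.le hθ.2.le) _)) hx⟩)⟩

def collisionAngle (R s : ℝ) : ℝ := 2 * arccos (s / √(R ^ 2 + s ^ 2))

lemma abs_div_sqrt_sq_add_sq_le_one (R s : ℝ) : |s / √(R ^ 2 + s ^ 2)| ≤ 1 := by
  rw [abs_div, abs_of_nonneg (sqrt_nonneg _)]
  exact div_le_one_of_le₀ (abs_le_sqrt (by nlinarith)) (sqrt_nonneg _)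

lemma cos_half_collisionAngle (R s : ℝ) :
    cos (collisionAngle R s / 2) = s / √(R ^ 2 + s ^ 2) := by
  have h := abs_le.1 (abs_div_sqrt_sq_add_sq_le_one R s)
  rw [collisionAngle, mul_div_cancel_left₀ _ two_ne_zero, cos_arccos h.1 h.2]

lemma sin_half_collisionAngle {R : ℝ} (hR : 0 < R) (s : ℝ) :
    sin (collisionAngle R s / 2) = R / √(R ^ 2 + s ^ 2) := by
  have hr : 0 < R ^ 2 + s ^ 2 := by positivity
  have hsq : 1 - (s / √(R ^ 2 + s ^ 2)) ^ 2 = (R / √(R ^ 2 + s ^ 2)) ^ 2 := by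
    rw [div_pow, div_pow, sq_sqrt hr.le]
    field_simp
    ring
  rw [collisionAngle, mul_div_cancel_left₀ _ two_ne_zero, sin_arccos, hsq, sqrt_sq (by positivity)]

lemma collisionAngle_mem_Ioo {R s : ℝ} (hR : 0 < R) (hs : 0 < s) :
    collisionAngle R s ∈ Ioo 0 π := by
  have hr : s < √(R ^ 2 + s ^ 2) := lt_sqrt_of_sq_lt (by nlinarith)
  have h0 : 0 < s / √(R ^ 2 + s ^ 2) := by positivity
  have h1 : s / √(R ^ 2 + s ^ 2) < 1 := (div_lt_one (hs.trans hr)).2 hr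
  constructor <;> unfold collisionAngle
  · linarith [arccos_pos.2 h1]
  · linarith [arccos_lt_pi_div_two.2 h0]

lemma inv_mul_rpow_eq_rpow_mul_angularFactor {R s : ℝ} (hR : 0 < R) (hs : 0 < s) (n γ ν β : ℝ) :
    R⁻¹ * (√(R ^ 2 + s ^ 2) ^ γ * β) * √(R ^ 2 + s ^ 2) ^ (-(n - 2)) =
      R ^ (-n - ν) * s ^ (γ + ν + 1) *
        angularFactor (-(n - 1) - ν) (γ + ν + 1) (collisionAngle R s) β := by
  rw [angularFactor, sin_half_collisionAngle hR, cos_half_collisionAngle]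
  set r := √(R ^ 2 + s ^ 2)
  have hr : 0 < r := by positivity
  have hRinv : R⁻¹ = exp (-log R) := by rw [exp_neg, exp_log hR]
  simp only [hRinv, rpow_def_of_pos hR, rpow_def_of_pos hr, rpow_def_of_pos hs,
    rpow_def_of_pos (div_pos hR hr), rpow_def_of_pos (div_pos hs hr), log_div hR.ne' hr.ne',
    log_div hs.ne' hr.ne']
  have key : exp (-log R) * exp (log r * γ) * exp (log r * -(n - 2)) =
      exp (log R * (-n - ν)) * exp (log s * (γ + ν + 1)) *
        (exp ((log R - log r) * -(-(n - 1) - ν)) * exp ((log s - log r) * -(γ + ν + 1))) := by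
    simp only [← exp_add]
    congr 1
    ring
  linear_combination β * key

lemma collisionIntegrand_comparable (N : ℕ) (γ ν : ℝ) {R s F K : ℝ} {x : ℝ≥0∞}
    (hR : 0 < R) (hs : 0 < s) (hF : 0 ≤ F) (hK : 1 ≤ K) (hx : x ≠ ∞)
    (hA : angularFactor (-((N : ℝ) - 1) - ν) (γ + ν + 1) (collisionAngle R s) x.toReal ≤ K ∧
      1 ≤ K * angularFactor (-((N : ℝ) - 1) - ν) (γ + ν + 1) (collisionAngle R s) x.toReal) :
    ENNReal.ofReal (R ^ (-(N : ℝ) - ν)) * ENNReal.ofReal (F * s ^ (γ + ν + 1)) ≤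
        ENNReal.ofReal (2 ^ (N - 1) * K) * (ENNReal.ofReal ((2 : ℝ) ^ (N - 1) / R) *
          (ENNReal.ofReal F * (ENNReal.ofReal (√(R ^ 2 + s ^ 2) ^ γ) * x) *
            ENNReal.ofReal (√(R ^ 2 + s ^ 2) ^ (-((N : ℝ) - 2))))) ∧
      ENNReal.ofReal ((2 : ℝ) ^ (N - 1) / R) *
          (ENNReal.ofReal F * (ENNReal.ofReal (√(R ^ 2 + s ^ 2) ^ γ) * x) *
            ENNReal.ofReal (√(R ^ 2 + s ^ 2) ^ (-((N : ℝ) - 2)))) ≤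
        ENNReal.ofReal (2 ^ (N - 1) * K) *
          (ENNReal.ofReal (R ^ (-(N : ℝ) - ν)) * ENNReal.ofReal (F * s ^ (γ + ν + 1))) := by
  have hfactor := inv_mul_rpow_eq_rpow_mul_angularFactor hR hs N γ ν x.toReal
  set A := angularFactor (-((N : ℝ) - 1) - ν) (γ + ν + 1) (collisionAngle R s) x.toReal
  set M := R ^ (-(N : ℝ) - ν) * s ^ (γ + ν + 1)
  have hP : (1 : ℝ) ≤ 2 ^ (N - 1) := one_le_pow₀ one_le_two
  have hFM : 0 ≤ F * M := by positivity
  have hA0 : 0 ≤ A := (pos_of_mul_pos_right (a := K) (by linarith [hA.2]) (by linarith)).le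
  have hmodel : ENNReal.ofReal (R ^ (-(N : ℝ) - ν)) * ENNReal.ofReal (F * s ^ (γ + ν + 1)) =
      ENNReal.ofReal (F * M) := by
    rw [← ENNReal.ofReal_mul (by positivity), mul_left_comm]
  have hcollision : ENNReal.ofReal ((2 : ℝ) ^ (N - 1) / R) *
      (ENNReal.ofReal F * (ENNReal.ofReal (√(R ^ 2 + s ^ 2) ^ γ) * x) *
        ENNReal.ofReal (√(R ^ 2 + s ^ 2) ^ (-((N : ℝ) - 2)))) =
      ENNReal.ofReal (2 ^ (N - 1) * (F * M * A)) := by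
    rw [← ENNReal.ofReal_toReal hx, ← ENNReal.ofReal_mul (by positivity),
      ← ENNReal.ofReal_mul hF, ← ENNReal.ofReal_mul (by positivity),
      ← ENNReal.ofReal_mul (by positivity), mul_assoc F M A, ← hfactor]
    ring_nf
  rw [hmodel, hcollision, ← ENNReal.ofReal_mul (by positivity),
    ← ENNReal.ofReal_mul (by positivity)]
  constructor <;> apply ENNReal.ofReal_le_ofReal
  · calc F * M ≤ K * A * (F * M) := le_mul_of_one_le_left hFM hA.2
      _ ≤ (2 ^ (N - 1) * 2 ^ (N - 1)) * (K * A * (F * M)) :=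
        le_mul_of_one_le_left (mul_nonneg (mul_nonneg (by linarith) hA0) hFM)
          (one_le_mul_of_one_le_of_one_le hP hP)
      _ = _ := by ring
  · calc (2 : ℝ) ^ (N - 1) * (F * M * A) ≤ 2 ^ (N - 1) * (F * M * K) := by gcongr; exact hA.1
      _ = _ := by ring

theorem boltzmann_kernel_comparable_general
    (N : ℕ) (hN : 2 ≤ N) (γ ν C_b : ℝ)
    (hC_b : 1 ≤ C_b) :
    ∃ c : ℝ, 1 ≤ c ∧
      ∀ (b : ℝ → ℝ≥0∞) (f : EuclideanSpace ℝ (Fin N) → ℝ),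
        Measurable b →
        -- the angular cross section bounds
        (∀ θ ∈ Ioo (0:ℝ) Real.pi,
          (0 ≤ Real.cos θ →
            ENNReal.ofReal (C_b⁻¹ * θ ^ (-((N : ℝ) - 1) - ν)) ≤ b (Real.cos θ) ∧
            b (Real.cos θ) ≤ ENNReal.ofReal (C_b * θ ^ (-((N : ℝ) - 1) - ν))) ∧
          (Real.cos θ < 0 →
            ENNReal.ofReal (C_b⁻¹ * Real.sin θ ^ (γ + ν + 1)) ≤ b (Real.cos θ) ∧
            b (Real.cos θ) ≤ ENNReal.ofReal (C_b * Real.sin θ ^ (γ + ν + 1)))) →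
        -- f is measurable and nonnegative
        Measurable f → (∀ v, 0 ≤ f v) →
        -- conclusion: two-sided comparison
        ∀ v v' : EuclideanSpace ℝ (Fin N), v' ≠ v →
          Kbar N γ ν f v v' ≤ ENNReal.ofReal c * KfCross N γ b f v v' ∧
          KfCross N γ b f v v' ≤ ENNReal.ofReal c * Kbar N γ ν f v v' := by
  obtain ⟨K, hK1, hK⟩ := exists_angularFactor_bounds (-((N : ℝ) - 1) - ν) (γ + ν + 1)
    (zero_lt_one.trans_le hC_b)
  refine ⟨2 ^ (N - 1) * K, one_le_mul_of_one_le_of_one_le (one_le_pow₀ one_le_two) hK1,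
    fun b f _ hb _ hf v v' hv => ?_⟩
  have hR : 0 < ‖v' - v‖ := norm_pos_iff.2 (sub_ne_zero.2 hv)
  have := Measure.nullSingletonClass_hausdorff (EuclideanSpace ℝ (Fin N))
    (d := (N : ℝ) - 1) (by linarith [(Nat.ofNat_le_cast.2 hN : (2 : ℝ) ≤ N)])
  have hpointwise := (Measure.ae_ne ((μH[(N : ℝ) - 1]).restrict
    {w : EuclideanSpace ℝ (Fin N) | ⟪w, v' - v⟫ = 0}) 0).mono fun w hw => by
    have hs : 0 < ‖w‖ := norm_pos_iff.2 hw
    have hθ := collisionAngle_mem_Ioo hR hs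
    obtain ⟨hx, hA⟩ := hK _ hθ _ (hb _ hθ).1 (hb _ hθ).2
    exact collisionIntegrand_comparable N γ ν hR hs (hf (v + w)) hK1 hx hA
  exact ⟨const_mul_setLIntegral_le ENNReal.ofReal_ne_top ENNReal.ofReal_ne_top
      ENNReal.ofReal_ne_top (hpointwise.mono fun _ h => h.1),
    const_mul_setLIntegral_le ENNReal.ofReal_ne_top ENNReal.ofReal_ne_top
      ENNReal.ofReal_ne_top (hpointwise.mono fun _ h => h.2)⟩

/-- **Comparability of the Boltzmann kernel with the model kernel** (Corollary 4.2 of the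
paper). For a non-cutoff cross section `B(r,θ) = r^γ b(cos θ)` with angular singularity
`b(cos θ) ≈ θ^{-(N-1)-ν}` for `cos θ ≥ 0` and `b(cos θ) ≈ (sin θ)^{γ+ν+1}` for
`cos θ < 0`, the kernel `K_f` of `Q₁` is comparable to
`K̄_f(v,v') = |v'-v|^{-N-ν} ∫_{w ⊥ (v'-v)} f(v+w)|w|^{γ+ν+1} dS(w)`. -/
theorem boltzmann_kernel_comparable
    (N : ℕ) (hN : 2 ≤ N) (γ ν C_b : ℝ)
    (hγ : -(N : ℝ) < γ) (hν : ν ∈ Ioo (0:ℝ) 2) (hC_b : 1 ≤ C_b) :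
    ∃ c : ℝ, 1 ≤ c ∧
      ∀ (b : ℝ → ℝ≥0∞) (f : EuclideanSpace ℝ (Fin N) → ℝ),
        Measurable b →
        -- the angular cross section bounds
        (∀ θ ∈ Ioo (0:ℝ) Real.pi,
          (0 ≤ Real.cos θ →
            ENNReal.ofReal (C_b⁻¹ * θ ^ (-((N : ℝ) - 1) - ν)) ≤ b (Real.cos θ) ∧
            b (Real.cos θ) ≤ ENNReal.ofReal (C_b * θ ^ (-((N : ℝ) - 1) - ν))) ∧
          (Real.cos θ < 0 →
            ENNReal.ofReal (C_b⁻¹ * Real.sin θ ^ (γ + ν + 1)) ≤ b (Real.cos θ) ∧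
            b (Real.cos θ) ≤ ENNReal.ofReal (C_b * Real.sin θ ^ (γ + ν + 1)))) →
        -- f is measurable and nonnegative
        Measurable f → (∀ v, 0 ≤ f v) →
        -- conclusion: two-sided comparison
        ∀ v v' : EuclideanSpace ℝ (Fin N), v' ≠ v →
          Kbar N γ ν f v v' ≤ ENNReal.ofReal c * KfCross N γ b f v v' ∧
          KfCross N γ b f v v' ≤ ENNReal.ofReal c * Kbar N γ ν f v v' :=
  boltzmann_kernel_comparable_general N hN γ ν C_b hC_b
end
end

section
/- Let N ≥ 1 be an integer and let f : ℝ^N → [0,∞) be measurable satisfying the macroscopic bounds with constants M₁, M₀, E₀, H₀. Then there exist r > 0, ℓ > 0 and m > 0, depending only on N, M₀, M₁, E₀ and H₀, such that the Lebesgue measure of the set {v ∈ B_r : f(v) > ℓ} is at least m. -/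
/-!
Split the mass `∫ f` over four regions: outside `B_r`, where it is at most `E₀ / r²` (Chebyshev
with the energy); inside `B_r` where `f ≤ ℓ`, at most `ℓ |B_r|`; where `f > K`, at most
`∫ (f log f)⁺ / log K`; and the set `{f > ℓ} ∩ B_r` that remains, where `f ≤ K`, at most `K`
times its measure. The positive part of the entropy is at most `H₀` plus its negative part, and
Young's inequality `-x log x ≤ t x + exp (-t - 1)` at `t = |v|²` bounds the negative part by the
energy plus a Gaussian integral. Choosing `r`, `ℓ` and `K` so that the first three pieces are each
at most `M₁ / 4` leaves `M₁ / 4 ≤ K |{f > ℓ} ∩ B_r|`.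
-/

open MeasureTheory Metric Set
open scoped ENNReal RealInnerProductSpace

noncomputable section

/-- The entropy bound `∫ f log f ≤ H₀`, stated in the extended sense: the positive part of
the integral minus the negative part is at most `H₀` (the inequality is arranged in `ℝ≥0∞`
so that it is meaningful even when the integral is `-∞`). -/
def EntropyLE (N : ℕ) (f : EuclideanSpace ℝ (Fin N) → ℝ) (H₀ : ℝ) : Prop :=
  (∫⁻ v, ENNReal.ofReal (f v * Real.log (f v))) + ENNReal.ofReal (-H₀) ≤
    (∫⁻ v, ENNReal.ofReal (-(f v * Real.log (f v)))) + ENNReal.ofReal H₀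

/-- The macroscopic bounds for the Boltzmann equation: mass between `M₁` and `M₀`,
energy at most `E₀` and entropy at most `H₀`. -/
def MacroBounds (N : ℕ) (f : EuclideanSpace ℝ (Fin N) → ℝ) (M₁ M₀ E₀ H₀ : ℝ) : Prop :=
  ENNReal.ofReal M₁ ≤ (∫⁻ v, ENNReal.ofReal (f v)) ∧
  (∫⁻ v, ENNReal.ofReal (f v)) ≤ ENNReal.ofReal M₀ ∧
  (∫⁻ v, ENNReal.ofReal (‖v‖ ^ 2 * f v)) ≤ ENNReal.ofReal E₀ ∧
  EntropyLE N f H₀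

open Real

theorem Real.neg_mul_log_le_mul_add_exp (t : ℝ) {x : ℝ} (hx : 0 ≤ x) :
    -(x * log x) ≤ t * x + exp (-t - 1) := by
  rcases hx.eq_or_lt with rfl | hx
  · simpa using (exp_pos _).le
  have key := log_le_sub_one_of_pos (show 0 < exp (-t - 1) / x by positivity)
  rw [log_div (exp_pos _).ne' hx.ne', log_exp, div_sub_one hx.ne', le_div_iff₀ hx] at key
  linarith

theorem lintegral_ofReal_exp_neg_sq_norm_sub_one_lt_top {V : Type*} [NormedAddCommGroup V]
    [InnerProductSpace ℝ V] [FiniteDimensional ℝ V] [MeasurableSpace V] [BorelSpace V] :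
    ∫⁻ v : V, ENNReal.ofReal (exp (-‖v‖ ^ 2 - 1)) < ∞ := by
  have hgauss : Integrable fun v : V => exp (-1 * ‖v‖ ^ 2) :=
    .of_integral_ne_zero <| by
      rw [GaussianFourier.integral_rexp_neg_mul_sq_norm one_pos]; positivity
  refine ((hgauss.const_mul (exp (-1))).congr (ae_of_all _ fun v => ?_)).lintegral_lt_top
  simp only [← exp_add]; ring_nf

section NormedSpace

variable {E : Type*} [NormedAddCommGroup E]

theorem ofReal_le_split_by_ball_and_levels {f : E → ℝ} {r l K : ℝ} (hr : 0 < r) (hK : 1 < K)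
    (v : E) (hfv : 0 ≤ f v) :
    ENNReal.ofReal (f v) ≤
      ENNReal.ofReal (‖v‖ ^ 2 * f v) / ENNReal.ofReal (r ^ 2) +
        (ball 0 r).indicator (fun _ => ENNReal.ofReal l) v +
        ENNReal.ofReal (f v * log (f v)) / ENNReal.ofReal (log K) +
        {v | v ∈ ball 0 r ∧ l < f v}.indicator (fun _ => ENNReal.ofReal K) v := by
  by_cases hv : v ∈ ball 0 r
  · by_cases hl : f v ≤ l
    · refine le_add_right (le_add_right (le_add_left ?_))
      rw [indicator_of_mem hv]
      exact ENNReal.ofReal_le_ofReal hl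
    by_cases hKf : K < f v
    · refine le_add_right (le_add_left ?_)
      have hlogK : 0 < log K := log_pos hK
      rw [← ENNReal.ofReal_div_of_pos hlogK]
      refine ENNReal.ofReal_le_ofReal ((le_div_iff₀ hlogK).2 ?_)
      exact mul_le_mul_of_nonneg_left (log_le_log (by linarith) hKf.le) hfv
    · refine le_add_left ?_
      rw [indicator_of_mem (show v ∈ {v | v ∈ ball 0 r ∧ l < f v} from ⟨hv, not_le.1 hl⟩)]
      exact ENNReal.ofReal_le_ofReal (not_lt.1 hKf)
  · refine le_add_right (le_add_right (le_add_right ?_))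
    rw [mem_ball_zero_iff, not_lt] at hv
    rw [← ENNReal.ofReal_div_of_pos (by positivity)]
    refine ENNReal.ofReal_le_ofReal ((le_div_iff₀ (by positivity)).2 ?_)
    exact (mul_comm _ _).trans_le (mul_le_mul_of_nonneg_right (pow_le_pow_left₀ hr.le hv 2) hfv)

variable [MeasurableSpace E] [OpensMeasurableSpace E] {μ : Measure E}

theorem lintegral_ofReal_neg_mul_log_le {f : E → ℝ} (hf0 : ∀ v, 0 ≤ f v) :
    ∫⁻ v, ENNReal.ofReal (-(f v * log (f v))) ∂μ ≤
      ∫⁻ v, ENNReal.ofReal (‖v‖ ^ 2 * f v) ∂μ + ∫⁻ v, ENNReal.ofReal (exp (-‖v‖ ^ 2 - 1)) ∂μ := by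
  rw [← lintegral_add_right _ (by fun_prop)]
  refine lintegral_mono fun v => le_trans ?_ ENNReal.ofReal_add_le
  exact ENNReal.ofReal_le_ofReal (neg_mul_log_le_mul_add_exp _ (hf0 v))

theorem ofReal_div_le_measure_ball_inter_superlevel {f : E → ℝ} (hf : Measurable f)
    (hf0 : ∀ v, 0 ≤ f v) {m r l K : ℝ} (hm : 0 < m) (hr : 0 < r) (hK : 1 < K)
    (hmass : ENNReal.ofReal m ≤ ∫⁻ v, ENNReal.ofReal (f v) ∂μ)
    (henergy : ∫⁻ v, ENNReal.ofReal (‖v‖ ^ 2 * f v) ∂μ ≤ ENNReal.ofReal (m / 4 * r ^ 2))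
    (hball : ENNReal.ofReal l * μ (ball 0 r) ≤ ENNReal.ofReal (m / 4))
    (hentropy : ∫⁻ v, ENNReal.ofReal (f v * log (f v)) ∂μ ≤ ENNReal.ofReal (m / 4 * log K)) :
    ENNReal.ofReal (m / (4 * K)) ≤ μ {v | v ∈ ball 0 r ∧ l < f v} := by
  set q := ENNReal.ofReal (m / 4)
  have htail : (∫⁻ v, ENNReal.ofReal (‖v‖ ^ 2 * f v) ∂μ) / ENNReal.ofReal (r ^ 2) ≤ q :=
    ENNReal.div_le_of_le_mul (henergy.trans_eq (ENNReal.ofReal_mul (by positivity)))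
  have hlarge : (∫⁻ v, ENNReal.ofReal (f v * log (f v)) ∂μ) / ENNReal.ofReal (log K) ≤ q :=
    ENNReal.div_le_of_le_mul (hentropy.trans_eq (ENNReal.ofReal_mul (by positivity)))
  have hsplit : q + q + q + q ≤ q + q + q + ENNReal.ofReal K * μ {v | v ∈ ball 0 r ∧ l < f v} :=
    calc q + q + q + q = ENNReal.ofReal m := by
          conv_rhs => rw [show m = m / 4 + m / 4 + m / 4 + m / 4 by ring]
          rw [ENNReal.ofReal_add, ENNReal.ofReal_add, ENNReal.ofReal_add] <;> positivity
      _ ≤ ∫⁻ v, ENNReal.ofReal (f v) ∂μ := hmass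
      _ ≤ ∫⁻ v, (ENNReal.ofReal (‖v‖ ^ 2 * f v) / ENNReal.ofReal (r ^ 2) +
            (ball 0 r).indicator (fun _ => ENNReal.ofReal l) v +
            ENNReal.ofReal (f v * log (f v)) / ENNReal.ofReal (log K) +
            {v | v ∈ ball 0 r ∧ l < f v}.indicator (fun _ => ENNReal.ofReal K) v) ∂μ :=
          lintegral_mono fun v => ofReal_le_split_by_ball_and_levels hr hK v (hf0 v)
      _ = (∫⁻ v, ENNReal.ofReal (‖v‖ ^ 2 * f v) ∂μ) / ENNReal.ofReal (r ^ 2) +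
            ∫⁻ v, (ball 0 r).indicator (fun _ => ENNReal.ofReal l) v ∂μ +
            (∫⁻ v, ENNReal.ofReal (f v * log (f v)) ∂μ) / ENNReal.ofReal (log K) +
            ∫⁻ v, {v | v ∈ ball 0 r ∧ l < f v}.indicator (fun _ => ENNReal.ofReal K) v ∂μ := by
          simp only [div_eq_mul_inv]
          have := measurableSet_ball (x := (0 : E)) (ε := r)
          rw [lintegral_add_left (by fun_prop (disch := assumption)),
            lintegral_add_left (by fun_prop (disch := assumption)),
            lintegral_add_left (by fun_prop (disch := assumption)),
            lintegral_mul_const' _ _ (by simp [hr.ne']),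
            lintegral_mul_const' _ _ (by simp [log_pos hK])]
      _ ≤ q + q + q + ENNReal.ofReal K * μ {v | v ∈ ball 0 r ∧ l < f v} := by
          gcongr
          · exact (lintegral_indicator_const_le _ _).trans hball
          · exact lintegral_indicator_const_le _ _
  have hq : q ≤ ENNReal.ofReal K * μ {v | v ∈ ball 0 r ∧ l < f v} :=
    (ENNReal.add_le_add_iff_left (by simp [q])).1 hsplit
  rw [← div_div, ENNReal.ofReal_div_of_pos (by linarith)]
  exact ENNReal.div_le_of_le_mul' hq

end NormedSpace

theorem EntropyLE.lintegral_ofReal_mul_log_le {N : ℕ} {f : EuclideanSpace ℝ (Fin N) → ℝ}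
    {H₀ C : ℝ} (h : EntropyLE N f H₀) (hC : 0 ≤ C)
    (hneg : ∫⁻ v, ENNReal.ofReal (-(f v * log (f v))) ≤ ENNReal.ofReal C) :
    ∫⁻ v, ENNReal.ofReal (f v * log (f v)) ≤ ENNReal.ofReal (H₀ + C) := by
  unfold EntropyLE at h
  rcases le_or_gt 0 H₀ with hH | hH
  · rw [ENNReal.ofReal_of_nonpos (by linarith), add_zero] at h
    rw [ENNReal.ofReal_add hH hC, add_comm]
    exact h.trans (by gcongr)
  · rw [ENNReal.ofReal_of_nonpos hH.le, add_zero] at h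
    rw [show H₀ + C = C - -H₀ by ring, ENNReal.ofReal_sub _ (neg_nonneg.2 hH.le)]
    exact ENNReal.le_sub_of_add_le_right ENNReal.ofReal_ne_top (h.trans hneg)

theorem superlevel_set_from_macroscopic_bounds_general
    (N : ℕ) (M₁ M₀ E₀ H₀ : ℝ)
    (hM₁ : 0 < M₁) (hE₀ : 0 < E₀) :
    ∃ r l m : ℝ, 0 < r ∧ 0 < l ∧ 0 < m ∧
      ∀ f : EuclideanSpace ℝ (Fin N) → ℝ,
        Measurable f → (∀ v, 0 ≤ f v) →
        MacroBounds N f M₁ M₀ E₀ H₀ →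
        ENNReal.ofReal m ≤
          volume {v : EuclideanSpace ℝ (Fin N) |
            v ∈ ball (0 : EuclideanSpace ℝ (Fin N)) r ∧ l < f v} := by
  set C := E₀ + (∫⁻ v : EuclideanSpace ℝ (Fin N), ENNReal.ofReal (exp (-‖v‖ ^ 2 - 1))).toReal
  set r := √(4 * E₀ / M₁)
  set V := (volume (ball (0 : EuclideanSpace ℝ (Fin N)) r)).toReal
  set K := exp (max (4 * (H₀ + C) / M₁) 1)
  have hC : 0 ≤ C := by positivity
  have hr : 0 < r := by positivity
  have hV : 0 < V := ENNReal.toReal_pos (measure_ball_pos _ _ hr).ne' measure_ball_lt_top.ne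
  refine ⟨r, M₁ / (4 * V), M₁ / (4 * K), hr, by positivity, by positivity, ?_⟩
  rintro f hf hf0 ⟨hmass, -, henergy, hentropy⟩
  have hneg : ∫⁻ v, ENNReal.ofReal (-(f v * log (f v))) ≤ ENNReal.ofReal C := by
    rw [ENNReal.ofReal_add hE₀.le ENNReal.toReal_nonneg,
      ENNReal.ofReal_toReal lintegral_ofReal_exp_neg_sq_norm_sub_one_lt_top.ne]
    exact (lintegral_ofReal_neg_mul_log_le hf0).trans (by gcongr)
  refine ofReal_div_le_measure_ball_inter_superlevel hf hf0 hM₁ hr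
    (one_lt_exp_iff.2 (by positivity)) hmass ?_ ?_ ?_
  · refine henergy.trans_eq (congrArg _ ?_)
    rw [sq_sqrt (by positivity)]
    field_simp
  · rw [show volume (ball (0 : EuclideanSpace ℝ (Fin N)) r) = ENNReal.ofReal V from
      (ENNReal.ofReal_toReal measure_ball_lt_top.ne).symm, ← ENNReal.ofReal_mul (by positivity)]
    exact le_of_eq (congrArg _ (by field_simp))
  · refine (hentropy.lintegral_ofReal_mul_log_le hC hneg).trans (ENNReal.ofReal_le_ofReal ?_)
    rw [log_exp]
    have hK := le_max_left (4 * (H₀ + C) / M₁) 1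
    rw [div_le_iff₀ hM₁] at hK
    linarith

/-- **Quantified superlevel set from macroscopic bounds** (Lemma 4.6 of the paper). A
nonnegative function with mass bounded below by `M₁ > 0` and above by `M₀`, energy bounded
by `E₀` and entropy bounded by `H₀` has a superlevel set `{f > ℓ} ∩ B_r` of measure at
least `m`, where `r`, `ℓ` and `m` depend only on `N`, `M₀`, `M₁`, `E₀` and `H₀`. -/
theorem superlevel_set_from_macroscopic_bounds
    (N : ℕ) (hN : 1 ≤ N) (M₁ M₀ E₀ H₀ : ℝ)
    (hM₁ : 0 < M₁) (hM : M₁ ≤ M₀) (hE₀ : 0 < E₀) :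
    ∃ r l m : ℝ, 0 < r ∧ 0 < l ∧ 0 < m ∧
      ∀ f : EuclideanSpace ℝ (Fin N) → ℝ,
        Measurable f → (∀ v, 0 ≤ f v) →
        MacroBounds N f M₁ M₀ E₀ H₀ →
        ENNReal.ofReal m ≤
          volume {v : EuclideanSpace ℝ (Fin N) |
            v ∈ ball (0 : EuclideanSpace ℝ (Fin N)) r ∧ l < f v} :=
  superlevel_set_from_macroscopic_bounds_general N M₁ M₀ E₀ H₀ hM₁ hE₀
end
end

section
/- Let N ≥ 2 be an integer and u ∈ ℝ^N ∖ {0}, and let H = {w ∈ ℝ^N : w·u = 0} be the hyperplane orthogonal to u. Define ψ : H → S^{N−1} by ψ(w) = 2|u|(u+w)/(|u|² + |w|²) − u/|u|. Then ψ is a bijection from H onto S^{N−1} ∖ {−u/|u|}, and for every measurable h : S^{N−1} → [0,∞]: ∫_{S^{N−1}} h(σ) dσ = 2^{N−1} |u|^{N−1} ∫_H h(ψ(w)) (|u|² + |w|²)^{−(N−1)} dS(w), where dσ is the surface measure on S^{N−1} and dS is the (N−1)-dimensional Hausdorff measure on H. -/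
/-!
On the hyperplane `H = u^⊥` the map `ψ` distorts distances by the geometric mean of the conformal
factor `λ w = 2|u|/(|u|² + |w|²)`: `|ψ w - ψ w'| = √(λ w λ w') |w - w'|`. On a piece of `H` where
`λ` stays in `[a, c a]`, `ψ` is therefore `c a`-Lipschitz with a `1/a`-Lipschitz inverse, so it
multiplies `d`-dimensional Hausdorff measure by `λ^d` up to a factor `c^d`. Cutting `H` into the
pieces `λ⁻¹ (c^k, c^(k+1)]`, `k ∈ ℤ`, and letting `c → 1` gives `μH[d] (ψ '' T) = ∫_T λ^d dμH[d]`,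
which is the change of variables, with `λ^(N-1) = 2^(N-1)|u|^(N-1)(|u|² + |w|²)^(-(N-1))`.
The inverse `σ ↦ |u| (σ + u/|u|) / (1 + ⟪σ, u/|u|⟫) - u` shows that `ψ` is onto the
sphere punctured at `-u/|u|`, and that point is `μH[N-1]`-null.
-/

open MeasureTheory Metric Set
open scoped ENNReal RealInnerProductSpace Topology

noncomputable section

section ZpowLayers

variable {α : Type*} {T : Set α} {g : α → ℝ} {c : ℝ}

theorem iUnion_inter_preimage_Ioc_zpow (hc : 1 < c) (hg : ∀ x ∈ T, 0 < g x) :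
    ⋃ k : ℤ, T ∩ g ⁻¹' Ioc (c ^ k) (c ^ (k + 1)) = T := by
  refine (iUnion_subset fun k => inter_subset_left).antisymm fun x hx => ?_
  obtain ⟨k, hk⟩ := exists_mem_Ioc_zpow (hg x hx) hc
  exact mem_iUnion.2 ⟨k, hx, hk⟩

theorem pairwise_disjoint_inter_preimage_Ioc_zpow (hc : 1 < c) :
    Pairwise (Function.onFun Disjoint fun k : ℤ => T ∩ g ⁻¹' Ioc (c ^ k) (c ^ (k + 1))) := by
  intro i j hij
  have hIoc : Pairwise (Function.onFun Disjoint fun k : ℤ => Ioc (c ^ k) (c ^ (k + 1))) := by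
    simpa only [Order.succ_eq_add_one] using
      (zpow_right_mono₀ hc.le).pairwise_disjoint_on_Ioc_succ
  exact ((hIoc hij).preimage g).mono inter_subset_right inter_subset_right

theorem Ioc_zpow_subset_Icc (hc : 0 < c) (k : ℤ) :
    Ioc (c ^ k) (c ^ (k + 1)) ⊆ Icc (c ^ k) (c * c ^ k) := by
  rw [zpow_add_one₀ hc.ne', mul_comm]
  exact Ioc_subset_Icc_self

end ZpowLayers

theorem ENNReal.le_of_forall_one_lt_le_ofReal_rpow_mul {a b : ℝ≥0∞} {d : ℝ}
    (h : ∀ c : ℝ, 1 < c → a ≤ ENNReal.ofReal c ^ d * b) : a ≤ b := by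
  have hcont : Continuous fun c : ℝ => ENNReal.ofReal c ^ d :=
    ENNReal.continuous_rpow_const.comp ENNReal.continuous_ofReal
  have hlim : Filter.Tendsto (fun c : ℝ => ENNReal.ofReal c ^ d * b) (𝓝[>] 1) (𝓝 b) := by
    simpa using ENNReal.Tendsto.mul_const ((hcont.tendsto 1).mono_left nhdsWithin_le_nhds)
      (Or.inl (by simp))
  exact ge_of_tendsto hlim (eventually_nhdsWithin_of_forall h)

section ConformalFactor

variable {X Y : Type*} [MetricSpace X] [MetricSpace Y]

def HasConformalFactorOn (f : X → Y) (g : X → ℝ) (s : Set X) : Prop :=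
  ∀ x ∈ s, ∀ y ∈ s, dist (f x) (f y) = √(g x * g y) * dist x y

theorem HasConformalFactorOn.injOn {f : X → Y} {g : X → ℝ} {s : Set X}
    (hf : HasConformalFactorOn f g s) (hg : ∀ x ∈ s, 0 < g x) : InjOn f s := by
  intro x hx y hy hxy
  have hdist := hf x hx y hy
  rw [hxy, dist_self, eq_comm, mul_eq_zero, dist_eq_zero] at hdist
  exact hdist.resolve_left (Real.sqrt_pos.2 (mul_pos (hg x hx) (hg y hy))).ne'

variable [MeasurableSpace X] [BorelSpace X] [MeasurableSpace Y] [BorelSpace Y] {d : ℝ}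

theorem hausdorffMeasure_le_mul_hausdorffMeasure_image {f : X → Y} {s : Set X} {K : NNReal}
    (hf : ∀ x ∈ s, ∀ y ∈ s, dist x y ≤ K * dist (f x) (f y)) (hd : 0 ≤ d) :
    μH[d] s ≤ (K : ℝ≥0∞) ^ d * μH[d] (f '' s) := by
  have hanti : AntilipschitzWith K (s.domRestrict f) :=
    AntilipschitzWith.of_le_mul_dist fun x y => hf x x.2 y y.2
  calc μH[d] s = μH[d] (univ : Set s) := by
        rw [← (isometry_subtype_coe (s := s)).hausdorffMeasure_image (Or.inl hd), image_univ,
          Subtype.range_coe]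
    _ ≤ (K : ℝ≥0∞) ^ d * μH[d] (s.domRestrict f '' univ) := hanti.le_hausdorffMeasure_image hd _
    _ = (K : ℝ≥0∞) ^ d * μH[d] (f '' s) := by rw [image_univ, range_domRestrict]

namespace HasConformalFactorOn

variable {f : X → Y} {g : X → ℝ} {s A T : Set X} {a b c : ℝ}

theorem hausdorffMeasure_image_le (hf : HasConformalFactorOn f g s) (hA : A ⊆ s)
    (hg : ∀ x ∈ A, 0 ≤ g x) (hgb : ∀ x ∈ A, g x ≤ b) (hd : 0 ≤ d) :
    μH[d] (f '' A) ≤ ENNReal.ofReal b ^ d * μH[d] A := by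
  refine LipschitzOnWith.hausdorffMeasure_image_le ?_ hd
  refine LipschitzOnWith.of_dist_le_mul fun x hx y hy => ?_
  have hb : 0 ≤ b := (hg x hx).trans (hgb x hx)
  rw [hf x (hA hx) y (hA hy), Real.coe_toNNReal b hb]
  refine mul_le_mul_of_nonneg_right (Real.sqrt_le_iff.2 ⟨hb, ?_⟩) dist_nonneg
  nlinarith [mul_le_mul (hgb x hx) (hgb y hy) (hg y hy) hb]

theorem le_hausdorffMeasure_image (hf : HasConformalFactorOn f g s) (hA : A ⊆ s) (ha : 0 < a)
    (hag : ∀ x ∈ A, a ≤ g x) (hd : 0 ≤ d) :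
    ENNReal.ofReal a ^ d * μH[d] A ≤ μH[d] (f '' A) := by
  have hdist : ∀ x ∈ A, ∀ y ∈ A, dist x y ≤ (a⁻¹).toNNReal * dist (f x) (f y) := by
    intro x hx y hy
    have hax := hag x hx
    have hay := hag y hy
    have hmean : a ≤ √(g x * g y) :=
      Real.le_sqrt_of_sq_le (by nlinarith [mul_le_mul hax hay ha.le (ha.le.trans hax)])
    rw [hf x (hA hx) y (hA hy), Real.coe_toNNReal _ (inv_nonneg.2 ha.le), ← mul_assoc,
      ← div_eq_inv_mul]
    exact le_mul_of_one_le_left dist_nonneg ((one_le_div ha).2 hmean)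
  calc ENNReal.ofReal a ^ d * μH[d] A
      ≤ ENNReal.ofReal a ^ d * (ENNReal.ofReal a⁻¹ ^ d * μH[d] (f '' A)) := by
        gcongr
        exact hausdorffMeasure_le_mul_hausdorffMeasure_image hdist hd
    _ = μH[d] (f '' A) := by
        rw [← mul_assoc, ← ENNReal.mul_rpow_of_nonneg _ _ hd, ← ENNReal.ofReal_mul ha.le,
          mul_inv_cancel₀ ha.ne', ENNReal.ofReal_one, ENNReal.one_rpow, one_mul]

theorem hausdorffMeasure_image_le_mul_setLIntegral_of_mem_Icc (hf : HasConformalFactorOn f g s)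
    (hA : A ⊆ s) (hAm : MeasurableSet A) (hgA : ∀ x ∈ A, g x ∈ Icc a (c * a)) (ha : 0 < a)
    (hc : 0 ≤ c) (hd : 0 ≤ d) :
    μH[d] (f '' A) ≤ ENNReal.ofReal c ^ d * ∫⁻ x in A, ENNReal.ofReal (g x) ^ d ∂μH[d] := by
  calc μH[d] (f '' A) ≤ ENNReal.ofReal (c * a) ^ d * μH[d] A :=
        hf.hausdorffMeasure_image_le hA (fun x hx => ha.le.trans (hgA x hx).1)
          (fun x hx => (hgA x hx).2) hd
    _ = ENNReal.ofReal c ^ d * ∫⁻ _ in A, ENNReal.ofReal a ^ d ∂μH[d] := by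
        rw [setLIntegral_const, ENNReal.ofReal_mul hc, ENNReal.mul_rpow_of_nonneg _ _ hd,
          mul_assoc]
    _ ≤ ENNReal.ofReal c ^ d * ∫⁻ x in A, ENNReal.ofReal (g x) ^ d ∂μH[d] := by
        gcongr 1
        refine setLIntegral_mono' hAm fun x hx => ?_
        gcongr
        exact (hgA x hx).1

theorem setLIntegral_le_mul_hausdorffMeasure_image_of_mem_Icc (hf : HasConformalFactorOn f g s)
    (hA : A ⊆ s) (hAm : MeasurableSet A) (hgA : ∀ x ∈ A, g x ∈ Icc a (c * a)) (ha : 0 < a)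
    (hc : 0 ≤ c) (hd : 0 ≤ d) :
    ∫⁻ x in A, ENNReal.ofReal (g x) ^ d ∂μH[d] ≤ ENNReal.ofReal c ^ d * μH[d] (f '' A) := by
  calc ∫⁻ x in A, ENNReal.ofReal (g x) ^ d ∂μH[d]
      ≤ ∫⁻ _ in A, ENNReal.ofReal (c * a) ^ d ∂μH[d] := by
        refine setLIntegral_mono' hAm fun x hx => ?_
        gcongr
        exact (hgA x hx).2
    _ = ENNReal.ofReal c ^ d * (ENNReal.ofReal a ^ d * μH[d] A) := by
        rw [setLIntegral_const, ENNReal.ofReal_mul hc, ENNReal.mul_rpow_of_nonneg _ _ hd,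
          mul_assoc]
    _ ≤ ENNReal.ofReal c ^ d * μH[d] (f '' A) := by
        gcongr
        exact hf.le_hausdorffMeasure_image hA ha (fun x hx => (hgA x hx).1) hd

theorem hausdorffMeasure_image_le_mul_setLIntegral (hf : HasConformalFactorOn f g s)
    (hg : ∀ x ∈ s, 0 < g x) (hgm : Measurable g) (hT : T ⊆ s) (hTm : MeasurableSet T)
    (hc : 1 < c) (hd : 0 ≤ d) :
    μH[d] (f '' T) ≤ ENNReal.ofReal c ^ d * ∫⁻ x in T, ENNReal.ofReal (g x) ^ d ∂μH[d] := by
  set L : ℤ → Set X := fun k => T ∩ g ⁻¹' Ioc (c ^ k) (c ^ (k + 1))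
  have hL : ⋃ k, L k = T := iUnion_inter_preimage_Ioc_zpow hc fun x hx => hg x (hT hx)
  have hc0 : 0 < c := one_pos.trans hc
  calc μH[d] (f '' T) = μH[d] (⋃ k, f '' L k) := by rw [← image_iUnion, hL]
    _ ≤ ∑' k, μH[d] (f '' L k) := measure_iUnion_le _
    _ ≤ ∑' k, ENNReal.ofReal c ^ d * ∫⁻ x in L k, ENNReal.ofReal (g x) ^ d ∂μH[d] :=
        ENNReal.tsum_le_tsum fun k => hf.hausdorffMeasure_image_le_mul_setLIntegral_of_mem_Icc
          (inter_subset_left.trans hT) (hTm.inter (hgm measurableSet_Ioc))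
          (fun x hx => Ioc_zpow_subset_Icc hc0 k hx.2) (zpow_pos hc0 k) hc0.le hd
    _ = ENNReal.ofReal c ^ d * ∫⁻ x in T, ENNReal.ofReal (g x) ^ d ∂μH[d] := by
        rw [ENNReal.tsum_mul_left, ← lintegral_iUnion
          (fun k => hTm.inter (hgm measurableSet_Ioc))
          (pairwise_disjoint_inter_preimage_Ioc_zpow hc), hL]

theorem setLIntegral_le_mul_hausdorffMeasure_image [PolishSpace X] (hf : HasConformalFactorOn f g s)
    (hfc : ContinuousOn f s) (hg : ∀ x ∈ s, 0 < g x) (hgm : Measurable g) (hT : T ⊆ s)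
    (hTm : MeasurableSet T) (hc : 1 < c) (hd : 0 ≤ d) :
    ∫⁻ x in T, ENNReal.ofReal (g x) ^ d ∂μH[d] ≤ ENNReal.ofReal c ^ d * μH[d] (f '' T) := by
  set L : ℤ → Set X := fun k => T ∩ g ⁻¹' Ioc (c ^ k) (c ^ (k + 1))
  have hL : ⋃ k, L k = T := iUnion_inter_preimage_Ioc_zpow hc fun x hx => hg x (hT hx)
  have hLs : ∀ k, L k ⊆ s := fun k => inter_subset_left.trans hT
  have hLm : ∀ k, MeasurableSet (L k) := fun k => hTm.inter (hgm measurableSet_Ioc)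
  have hinj : InjOn f s := hf.injOn hg
  have hc0 : 0 < c := one_pos.trans hc
  calc ∫⁻ x in T, ENNReal.ofReal (g x) ^ d ∂μH[d]
      = ∑' k, ∫⁻ x in L k, ENNReal.ofReal (g x) ^ d ∂μH[d] := by
        rw [← lintegral_iUnion hLm (pairwise_disjoint_inter_preimage_Ioc_zpow hc), hL]
    _ ≤ ∑' k, ENNReal.ofReal c ^ d * μH[d] (f '' L k) :=
        ENNReal.tsum_le_tsum fun k => hf.setLIntegral_le_mul_hausdorffMeasure_image_of_mem_Icc (hLs k)
          (hLm k) (fun x hx => Ioc_zpow_subset_Icc hc0 k hx.2) (zpow_pos hc0 k) hc0.le hd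
    _ = ENNReal.ofReal c ^ d * μH[d] (f '' T) := by
        rw [ENNReal.tsum_mul_left, ← measure_iUnion
          (fun i j hij => (pairwise_disjoint_inter_preimage_Ioc_zpow hc hij).image hinj
            (hLs i) (hLs j))
          (fun k => (hLm k).image_of_continuousOn_injOn (hfc.mono (hLs k)) (hinj.mono (hLs k))),
          ← image_iUnion, hL]

theorem hausdorffMeasure_image_eq_setLIntegral [PolishSpace X] (hf : HasConformalFactorOn f g s)
    (hfc : ContinuousOn f s) (hg : ∀ x ∈ s, 0 < g x) (hgm : Measurable g) (hT : T ⊆ s)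
    (hTm : MeasurableSet T) (hd : 0 ≤ d) :
    μH[d] (f '' T) = ∫⁻ x in T, ENNReal.ofReal (g x) ^ d ∂μH[d] :=
  le_antisymm
    (ENNReal.le_of_forall_one_lt_le_ofReal_rpow_mul fun _ hc =>
      hf.hausdorffMeasure_image_le_mul_setLIntegral hg hgm hT hTm hc hd)
    (ENNReal.le_of_forall_one_lt_le_ofReal_rpow_mul fun _ hc =>
      hf.setLIntegral_le_mul_hausdorffMeasure_image hfc hg hgm hT hTm hc hd)

theorem map_withDensity_eq_restrict_image [PolishSpace X] (hf : HasConformalFactorOn f g s)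
    (hfc : Continuous f) (hg : ∀ x ∈ s, 0 < g x) (hgm : Measurable g) (hs : MeasurableSet s)
    (hd : 0 ≤ d) :
    Measure.map f ((μH[d].restrict s).withDensity fun x => ENNReal.ofReal (g x) ^ d) =
      μH[d].restrict (f '' s) := by
  ext t ht
  have hft : MeasurableSet (f ⁻¹' t) := hfc.measurable ht
  rw [Measure.map_apply hfc.measurable ht, withDensity_apply _ hft, Measure.restrict_apply ht,
    Measure.restrict_restrict hft, ← image_preimage_inter,
    hf.hausdorffMeasure_image_eq_setLIntegral hfc.continuousOn hg hgm inter_subset_right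
      (hft.inter hs) hd]

theorem lintegral_image_eq_lintegral_mul_rpow [PolishSpace X] (hf : HasConformalFactorOn f g s)
    (hfc : Continuous f) (hg : ∀ x ∈ s, 0 < g x) (hgm : Measurable g) (hs : MeasurableSet s)
    (hd : 0 ≤ d) {h : Y → ℝ≥0∞} (hh : Measurable h) :
    ∫⁻ y in f '' s, h y ∂μH[d] = ∫⁻ x in s, h (f x) * ENNReal.ofReal (g x) ^ d ∂μH[d] := by
  rw [← hf.map_withDensity_eq_restrict_image hfc hg hgm hs hd, lintegral_map hh hfc.measurable]
  refine (lintegral_withDensity_eq_lintegral_mul _ (hgm.ennreal_ofReal.pow_const d)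
    (hh.comp hfc.measurable)).trans (lintegral_congr fun x => mul_comm _ _)

end HasConformalFactorOn

end ConformalFactor

section Stereographic

variable {E : Type*} [NormedAddCommGroup E] {u w : E}

def stereoScale (u w : E) : ℝ := 2 * ‖u‖ / (‖u‖ ^ 2 + ‖w‖ ^ 2)

theorem stereoScale_pos (hu : u ≠ 0) (w : E) : 0 < stereoScale u w := by
  have hr := norm_pos_iff.2 hu
  unfold stereoScale
  positivity

theorem stereoScale_mul_eq (hu : u ≠ 0) (w : E) :
    stereoScale u w * (‖u‖ ^ 2 + ‖w‖ ^ 2) = 2 * ‖u‖ := by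
  have hr := norm_pos_iff.2 hu
  unfold stereoScale
  field_simp

theorem continuous_stereoScale (hu : u ≠ 0) : Continuous (stereoScale u) := by
  have hr := norm_pos_iff.2 hu
  exact continuous_const.div (by fun_prop) fun w => by positivity

theorem ofReal_stereoScale_rpow_natCast (hu : u ≠ 0) (w : E) (n : ℕ) :
    ENNReal.ofReal (stereoScale u w) ^ (n : ℝ) =
      2 ^ n * ENNReal.ofReal (‖u‖ ^ n) * ENNReal.ofReal ((‖u‖ ^ 2 + ‖w‖ ^ 2) ^ (-(n : ℝ))) := by
  have hP : 0 < ‖u‖ ^ 2 + ‖w‖ ^ 2 := by have hr := norm_pos_iff.2 hu; positivity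
  rw [ENNReal.rpow_natCast, ← ENNReal.ofReal_pow (stereoScale_pos hu w).le, stereoScale,
    Real.rpow_neg hP.le, Real.rpow_natCast, div_pow, mul_pow, div_eq_mul_inv,
    ENNReal.ofReal_mul (by positivity), ENNReal.ofReal_mul (by positivity),
    ENNReal.ofReal_pow zero_le_two, ENNReal.ofReal_ofNat]

variable [InnerProductSpace ℝ E]

def stereoMap (u w : E) : E := stereoScale u w • (u + w) - ‖u‖⁻¹ • u

theorem continuous_stereoMap (hu : u ≠ 0) : Continuous (stereoMap u) :=
  ((continuous_stereoScale hu).smul (continuous_const.add continuous_id)).sub continuous_const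

theorem norm_add_sq_of_inner_eq_zero (hw : ⟪w, u⟫ = 0) : ‖u + w‖ ^ 2 = ‖u‖ ^ 2 + ‖w‖ ^ 2 := by
  rw [norm_add_sq_real, real_inner_comm, hw]
  ring

theorem norm_stereoMap (hu : u ≠ 0) (hw : ⟪w, u⟫ = 0) : ‖stereoMap u w‖ = 1 := by
  have hr : ‖u‖ ≠ 0 := norm_ne_zero_iff.2 hu
  have hsq : ‖stereoMap u w‖ ^ 2 = 1 := by
    rw [stereoMap, norm_sub_sq_real, inner_smul_left, inner_smul_right, inner_add_left, hw,
      real_inner_self_eq_norm_sq, norm_smul, norm_smul, mul_pow, mul_pow,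
      norm_add_sq_of_inner_eq_zero hw]
    simp only [Real.norm_eq_abs, sq_abs, abs_inv, abs_norm, RCLike.conj_to_real]
    linear_combination stereoScale u w * stereoScale_mul_eq hu w +
      (‖u‖⁻¹ * ‖u‖ + 1 - 2 * stereoScale u w * ‖u‖) * inv_mul_cancel₀ hr
  exact (pow_eq_one_iff_of_nonneg (norm_nonneg _) two_ne_zero).1 hsq

theorem hasConformalFactorOn_stereoMap (hu : u ≠ 0) :
    HasConformalFactorOn (stereoMap u) (stereoScale u) {w | ⟪w, u⟫ = 0} := by
  intro w (hw : ⟪w, u⟫ = 0) w' (hw' : ⟪w', u⟫ = 0)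
  have hsub : stereoMap u w - stereoMap u w' =
      stereoScale u w • (u + w) - stereoScale u w' • (u + w') := by
    rw [stereoMap, stereoMap, sub_sub_sub_cancel_right]
  have hinner : ⟪u + w, u + w'⟫ = ‖u‖ ^ 2 + ⟪w, w'⟫ := by
    rw [inner_add_left, inner_add_right, inner_add_right, real_inner_comm w' u, hw, hw',
      real_inner_self_eq_norm_sq]
    ring
  have hsq : dist (stereoMap u w) (stereoMap u w') ^ 2 =
      (√(stereoScale u w * stereoScale u w') * dist w w') ^ 2 := by
    rw [dist_eq_norm, dist_eq_norm, hsub, mul_pow,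
      Real.sq_sqrt (mul_pos (stereoScale_pos hu w) (stereoScale_pos hu w')).le, norm_sub_sq_real,
      norm_sub_sq_real, inner_smul_left, inner_smul_right, hinner, norm_smul, norm_smul, mul_pow,
      mul_pow, norm_add_sq_of_inner_eq_zero hw, norm_add_sq_of_inner_eq_zero hw']
    simp only [Real.norm_eq_abs, sq_abs, RCLike.conj_to_real]
    linear_combination (stereoScale u w - stereoScale u w') *
      (stereoScale_mul_eq hu w - stereoScale_mul_eq hu w')
  exact (pow_left_inj₀ dist_nonneg (by positivity) two_ne_zero).1 hsq

theorem stereoMap_ne_neg (hu : u ≠ 0) (hw : ⟪w, u⟫ = 0) : stereoMap u w ≠ -(‖u‖⁻¹ • u) := by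
  intro h
  have hzero : stereoScale u w • (u + w) = 0 := by
    rwa [stereoMap, sub_eq_iff_eq_add, neg_add_cancel] at h
  have hnorm : ‖u + w‖ ^ 2 = ‖u‖ ^ 2 + ‖w‖ ^ 2 := norm_add_sq_of_inner_eq_zero hw
  rw [(smul_eq_zero_iff_right (stereoScale_pos hu w).ne').1 hzero, norm_zero] at hnorm
  have hr := norm_pos_iff.2 hu
  nlinarith

theorem surjOn_stereoMap (hu : u ≠ 0) :
    SurjOn (stereoMap u) {w | ⟪w, u⟫ = 0} (sphere 0 1 \ {-(‖u‖⁻¹ • u)}) := by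
  rintro σ ⟨hσ, hσu : σ ≠ -(‖u‖⁻¹ • u)⟩
  rw [mem_sphere_zero_iff_norm] at hσ
  set r := ‖u‖
  set e : E := r⁻¹ • u
  set t := 1 + ⟪σ, e⟫
  set w : E := (r / t) • (σ + e) - u
  have hr : 0 < r := norm_pos_iff.2 hu
  have he : ‖e‖ = 1 := norm_smul_inv_norm hu
  have hσe : ‖σ + e‖ ^ 2 = 2 * t := by
    rw [norm_add_sq_real, hσ, he]
    ring
  have ht : 0 < t := by
    have hpos : 0 < ‖σ + e‖ := norm_pos_iff.2 fun h => hσu (eq_neg_of_add_eq_zero_left h)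
    nlinarith
  have hue : u = r • e := by rw [smul_inv_smul₀ hr.ne']
  have hsum : u + w = (r / t) • (σ + e) := add_sub_cancel _ _
  have hw : ⟪w, u⟫ = 0 := by
    have hsum_inner : ⟪u + w, u⟫ = r ^ 2 := by
      rw [hsum, hue, inner_smul_left, inner_smul_right, inner_add_left, real_inner_self_eq_norm_sq,
        he]
      simp only [RCLike.conj_to_real]
      field_simp
      ring
    rwa [inner_add_left, real_inner_self_eq_norm_sq, add_eq_left] at hsum_inner
  refine ⟨w, hw, ?_⟩
  have hP : r ^ 2 + ‖w‖ ^ 2 = 2 * r ^ 2 / t := by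
    rw [← norm_add_sq_of_inner_eq_zero hw, hsum, norm_smul, mul_pow, hσe, Real.norm_eq_abs,
      sq_abs]
    field_simp
  have hscale : stereoScale u w * (r / t) = 1 := by
    change 2 * r / (r ^ 2 + ‖w‖ ^ 2) * (r / t) = 1
    rw [hP]
    field_simp
  rw [stereoMap, hsum, smul_smul, hscale, one_smul, add_sub_cancel_right]

theorem bijOn_stereoMap (hu : u ≠ 0) :
    BijOn (stereoMap u) {w | ⟪w, u⟫ = 0} (sphere 0 1 \ {-(‖u‖⁻¹ • u)}) :=
  ⟨fun _ hw => ⟨mem_sphere_zero_iff_norm.2 (norm_stereoMap hu hw), stereoMap_ne_neg hu hw⟩,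
    (hasConformalFactorOn_stereoMap hu).injOn fun w _ => stereoScale_pos hu w,
    surjOn_stereoMap hu⟩

theorem setLIntegral_sphere_eq_setLIntegral_stereoMap [MeasurableSpace E] [BorelSpace E]
    [CompleteSpace E] [SecondCountableTopology E] (hu : u ≠ 0) {d : ℝ} (hd : 0 < d)
    {h : E → ℝ≥0∞} (hh : Measurable h) :
    ∫⁻ σ in sphere 0 1, h σ ∂μH[d] =
      ∫⁻ w in {w | ⟪w, u⟫ = 0}, h (stereoMap u w) * ENNReal.ofReal (stereoScale u w) ^ d
        ∂μH[d] := by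
  have hnull := Measure.nullSingletonClass_hausdorff E hd
  rw [← setLIntegral_congr (sdiff_null_ae_eq_self (measure_singleton (-(‖u‖⁻¹ • u)))),
    ← (bijOn_stereoMap hu).image_eq]
  exact (hasConformalFactorOn_stereoMap hu).lintegral_image_eq_lintegral_mul_rpow (continuous_stereoMap hu)
    (fun w _ => stereoScale_pos hu w) (continuous_stereoScale hu).measurable
    (measurableSet_eq_fun (by fun_prop) measurable_const) hd.le hh

end Stereographic

/-- **The stereographic change of variables on the sphere** (the conformal change of
variables used in the cancellation lemma, Lemma 5.1 of the paper). For `u ≠ 0`, the map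
`ψ(w) = 2|u|(u+w)/(|u|²+|w|²) − u/|u|` is a bijection from the hyperplane `{w : w·u = 0}`
onto `S^{N-1} ∖ {−u/|u|}`, and for every measurable `h : S^{N-1} → [0,∞]`,
`∫_{S^{N-1}} h dσ = 2^{N-1}|u|^{N-1} ∫_H h(ψ(w)) (|u|²+|w|²)^{-(N-1)} dS(w)`. -/
theorem stereographic_change_of_variables
    (N : ℕ) (hN : 2 ≤ N) (u : EuclideanSpace ℝ (Fin N)) (hu : u ≠ 0) :
    Set.BijOn
      (fun w : EuclideanSpace ℝ (Fin N) =>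
        ((2 * ‖u‖) / (‖u‖ ^ 2 + ‖w‖ ^ 2)) • (u + w) - ‖u‖⁻¹ • u)
      {w : EuclideanSpace ℝ (Fin N) | ⟪w, u⟫ = 0}
      (sphere (0 : EuclideanSpace ℝ (Fin N)) 1 \ {-(‖u‖⁻¹ • u)}) ∧
    ∀ h : EuclideanSpace ℝ (Fin N) → ℝ≥0∞, Measurable h →
      (∫⁻ σ in sphere (0 : EuclideanSpace ℝ (Fin N)) 1, h σ ∂(μH[(N : ℝ) - 1])) =
        (2 : ℝ≥0∞) ^ (N - 1) * ENNReal.ofReal (‖u‖ ^ (N - 1)) *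
          ∫⁻ w in {w : EuclideanSpace ℝ (Fin N) | ⟪w, u⟫ = 0},
            h (((2 * ‖u‖) / (‖u‖ ^ 2 + ‖w‖ ^ 2)) • (u + w) - ‖u‖⁻¹ • u) *
              ENNReal.ofReal ((‖u‖ ^ 2 + ‖w‖ ^ 2) ^ (-((N : ℝ) - 1)))
            ∂(μH[(N : ℝ) - 1]) := by
  have hN1 : ((N - 1 : ℕ) : ℝ) = (N : ℝ) - 1 := by rw [Nat.cast_sub (by omega), Nat.cast_one]
  have hd : (0 : ℝ) < (N : ℝ) - 1 := by rw [← hN1]; exact_mod_cast (by omega : 0 < N - 1)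
  refine ⟨bijOn_stereoMap hu, fun h hh => ?_⟩
  rw [setLIntegral_sphere_eq_setLIntegral_stereoMap hu hd hh, ← lintegral_const_mul' _ _
    (by finiteness)]
  refine lintegral_congr fun w => ?_
  rw [← hN1, ofReal_stereoScale_rpow_natCast hu, hN1]
  simp only [stereoMap, stereoScale]
  ring
end
end
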